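/- Let P ⊆ ℂ be a continuum, let a, b ∈ ℂ and δ > 0 be such that closure(B_δ(a)) ∩ closure(B_δ(b)) = ∅, and suppose P intersects both circles ∂B_δ(a) and ∂B_δ(b). Then P \ (B_δ(a) ∪ B_δ(b)) has a connected component that intersects both ∂B_δ(a) and ∂B_δ(b). -/

import Mathlib

/-!
Work with open sets `U`, `V` with disjoint closures (here the two balls) and
`K = P \ (U ∪ V)`. If no component of the compactum `K` met both `∂U` and `∂V`, then, since
the space of components of a compact Hausdorff space is profinite, a relatively clopen `C ⊆ K`
would contain `K ∩ ∂U` and miss `K ∩ ∂V`. The disjoint closed sets `C ∪ (P ∩ closure U)` and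
`(K \ C) ∪ (P ∩ closure V)` would then cover `P`, each meeting it, against connectedness.
-/

open Metric Set Filter Topology

noncomputable section

/-- A Jordan curve: a subset of `ℂ` homeomorphic to the unit circle. -/
def JordanCurve (J : Set ℂ) : Prop :=
  Nonempty (J ≃ₜ (Metric.sphere (0 : ℂ) 1))

/-- `A` is a connected component of the set `S`. -/
def IsComponentOf (A S : Set ℂ) : Prop :=
  ∃ z ∈ S, A = connectedComponentIn S z

/-- Convergence of a sequence of sets in Hausdorff distance. -/
def HausdorffConv (P : ℕ → Set ℂ) (Q : Set ℂ) : Prop :=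
  Filter.Tendsto (fun n => Metric.hausdorffDist (P n) Q) Filter.atTop (nhds 0)

/-- The Schönflies relation `R_K` on a compactum `K ⊆ ℂ`: `x R_K y` iff `x = y` or
there exist disjoint Jordan curves `J₁ ∋ x`, `J₂ ∋ y` such that, for the component `U`
of the complement of `J₁ ∪ J₂` whose frontier is `J₁ ∪ J₂`, the set `closure U ∩ K`
has an infinite sequence of pairwise distinct components `P n`, each meeting both `J₁`
and `J₂`, converging in Hausdorff distance to a compact set `P∞` containing `x` and `y`. -/
def SchRel (K : Set ℂ) (x y : ℂ) : Prop :=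
  x = y ∨
  ∃ J₁ J₂ : Set ℂ, JordanCurve J₁ ∧ JordanCurve J₂ ∧ Disjoint J₁ J₂ ∧
    x ∈ J₁ ∧ y ∈ J₂ ∧
    ∃ U : Set ℂ, IsComponentOf U (J₁ ∪ J₂)ᶜ ∧ frontier U = J₁ ∪ J₂ ∧
      ∃ P : ℕ → Set ℂ,
        (∀ n, IsComponentOf (P n) (closure U ∩ K)) ∧
        (∀ m n, m ≠ n → P m ≠ P n) ∧
        (∀ n, (P n ∩ J₁).Nonempty) ∧
        (∀ n, (P n ∩ J₂).Nonempty) ∧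
        ∃ Pinf : Set ℂ, IsCompact Pinf ∧ HausdorffConv P Pinf ∧ x ∈ Pinf ∧ y ∈ Pinf

/-- The graph of the Schönflies relation, as a subset of `K × K ⊆ ℂ × ℂ`. -/
def SchRelGraph (K : Set ℂ) : Set (ℂ × ℂ) :=
  {p : ℂ × ℂ | p.1 ∈ K ∧ p.2 ∈ K ∧ SchRel K p.1 p.2}

/-- The fiber at `x` of the closure (in `K × K`) of the Schönflies relation. -/
def schFiber (K : Set ℂ) (x : ℂ) : Set ℂ :=
  {y : ℂ | (x, y) ∈ closure (SchRelGraph K)}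

/-- `E` is an equivalence relation on `K` whose graph is closed in `K × K`. -/
def IsClosedEquivOn (K : Set ℂ) (E : ℂ → ℂ → Prop) : Prop :=
  (∀ x ∈ K, E x x) ∧
  (∀ x y, x ∈ K → y ∈ K → E x y → E y x) ∧
  (∀ x y z, x ∈ K → y ∈ K → z ∈ K → E x y → E y z → E x z) ∧
  IsClosed {p : ℂ × ℂ | p.1 ∈ K ∧ p.2 ∈ K ∧ E p.1 p.2}

/-- The Schönflies equivalence `∼_K`: the smallest equivalence relation on `K`
containing `R_K` whose graph is closed in `K × K`, realized as the intersection of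
all such equivalence relations. -/
def SchEquiv (K : Set ℂ) (x y : ℂ) : Prop :=
  ∀ E : ℂ → ℂ → Prop, IsClosedEquivOn K E →
    (∀ a b, a ∈ K → b ∈ K → SchRel K a b → E a b) → E x y

/-- The `∼_K`-equivalence class (atom of `K`) of a point `x`. -/
def schClass (K : Set ℂ) (x : ℂ) : Set ℂ :=
  {y : ℂ | y ∈ K ∧ SchEquiv K x y}

/-- A continuous map `f : ℂ → ℂ` is confluent if every connected component of the
preimage of a continuum `B` is mapped onto `B`. -/
def Confluent (f : ℂ → ℂ) : Prop :=
  ∀ B : Set ℂ, IsCompact B → IsConnected B →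
    ∀ A : Set ℂ, IsComponentOf A (f ⁻¹' B) → f '' A = B

section CutWire

variable {X : Type*} [TopologicalSpace X]

theorem exists_isClopen_superset_disjoint_of_connectedComponent [CompactSpace X] [T2Space X]
    {A B : Set X} (hA : IsClosed A) (hB : IsClosed B)
    (h : ∀ x ∈ A, Disjoint (connectedComponent x) B) :
    ∃ C : Set X, IsClopen C ∧ A ⊆ C ∧ Disjoint C B := by
  let π : X → ConnectedComponents X := ConnectedComponents.mk
  have hπ : Continuous π := ConnectedComponents.continuous_coe
  have hAB : π '' A ⊆ (π '' B)ᶜ := by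
    rintro _ ⟨x, hx, rfl⟩ ⟨y, hy, hyx⟩
    exact disjoint_left.mp (h x hx).symm hy (ConnectedComponents.coe_eq_coe'.mp hyx)
  obtain ⟨C, hC, hAC, hCB⟩ := exists_clopen_of_closed_subset_open
    (hA.isCompact.image hπ).isClosed (hB.isCompact.image hπ).isClosed.isOpen_compl hAB
  exact ⟨π ⁻¹' C, hC.preimage hπ, image_subset_iff.mp hAC,
    disjoint_left.mpr fun y hyC hyB => hCB hyC ⟨y, hyB, rfl⟩⟩

theorem IsCompact.exists_isClosed_superset_disjoint_of_connectedComponentIn [T2Space X]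
    {K A B : Set X} (hK : IsCompact K) (hA : IsClosed A) (hB : IsClosed B) (hAK : A ⊆ K)
    (h : ∀ x ∈ A, Disjoint (connectedComponentIn K x) B) :
    ∃ C ⊆ K, IsClosed C ∧ IsClosed (K \ C) ∧ A ⊆ C ∧ Disjoint C B := by
  have := isCompact_iff_compactSpace.mp hK
  have hval : IsClosedMap ((↑) : K → X) := hK.isClosed.isClosedEmbedding_subtypeVal.isClosedMap
  obtain ⟨C, hC, hAC, hCB⟩ := exists_isClopen_superset_disjoint_of_connectedComponent
    (hA.preimage continuous_subtype_val) (hB.preimage continuous_subtype_val)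
    fun (x : K) (hx : ↑x ∈ A) => by
      replace hx := h x hx
      rw [connectedComponentIn_eq_image x.2] at hx
      exact (hx.preimage _).mono_left (subset_preimage_image _ _)
  refine ⟨(↑) '' C, Subtype.coe_image_subset K C, hval _ hC.isClosed, ?_,
    fun x hx => ⟨⟨x, hAK hx⟩, hAC hx, rfl⟩, ?_⟩
  · have hcompl : K \ (↑) '' C = (↑) '' Cᶜ := by
      rw [image_compl_eq_range_sdiff_image Subtype.val_injective, Subtype.range_coe]
    exact hcompl ▸ hval _ hC.compl.isClosed
  · exact disjoint_left.mpr (by rintro _ ⟨y, hy, rfl⟩; exact disjoint_left.mp hCB hy)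

theorem IsPreconnected.not_inter_frontiers_nonempty_of_cut {P U V C : Set X}
    (hPc : IsPreconnected P) (hP : IsClosed P) (hU : IsOpen U) (hV : IsOpen V) (hUV : Disjoint (closure U) (closure V))
    (hCK : C ⊆ P \ (U ∪ V)) (hC : IsClosed C) (hKC : IsClosed ((P \ (U ∪ V)) \ C))
    (hUC : P ∩ frontier U ⊆ C) (hCV : Disjoint C (P ∩ frontier V)) :
    ¬((P ∩ frontier U).Nonempty ∧ (P ∩ frontier V).Nonempty) := by
  simp only [hU.frontier_eq, hV.frontier_eq] at hUC hCV ⊢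
  set K := P \ (U ∪ V)
  have hcover : P ⊆ (C ∪ P ∩ closure U) ∪ (K \ C ∪ P ∩ closure V) := by
    intro x hx
    by_cases hxU : x ∈ U
    · exact Or.inl (Or.inr ⟨hx, subset_closure hxU⟩)
    by_cases hxV : x ∈ V
    · exact Or.inr (Or.inr ⟨hx, subset_closure hxV⟩)
    by_cases hxC : x ∈ C
    · exact Or.inl (Or.inl hxC)
    · exact Or.inr (Or.inl ⟨⟨hx, fun h => h.elim hxU hxV⟩, hxC⟩)
  have hdisj : Disjoint (C ∪ P ∩ closure U) (K \ C ∪ P ∩ closure V) := by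
    rw [disjoint_union_left, disjoint_union_right, disjoint_union_right]
    refine ⟨⟨disjoint_sdiff_right, disjoint_left.mpr fun z hzC hz => ?_⟩,
      ⟨disjoint_left.mpr fun z hz hz' => ?_, hUV.mono inter_subset_right inter_subset_right⟩⟩
    · exact disjoint_left.mp hCV hzC ⟨hz.1, hz.2, fun hzV => (hCK hzC).2 (Or.inr hzV)⟩
    · exact hz'.2 (hUC ⟨hz.1, hz.2, fun hzU => hz'.1.2 (Or.inl hzU)⟩)
  rintro ⟨⟨xu, hxu⟩, ⟨xv, hxv⟩⟩
  rcases (isPreconnected_iff_subset_of_fully_disjoint_closed hP).mp hPc _ _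
    (hC.union (hP.inter isClosed_closure)) (hKC.union (hP.inter isClosed_closure))
    hcover hdisj with hPsub | hPsub
  · rcases hPsub hxv.1 with hxv' | hxv'
    · exact disjoint_left.mp hCV hxv' hxv
    · exact hUV.notMem_of_mem_left hxv'.2 hxv.2.1
  · rcases hPsub hxu.1 with hxu' | hxu'
    · exact hxu'.2 (hUC hxu)
    · exact hUV.notMem_of_mem_left hxu.2.1 hxu'.2

theorem IsCompact.exists_connectedComponentIn_sdiff_inter_frontiers_nonempty [T2Space X]
    {P U V : Set X} (hP : IsCompact P) (hPc : IsPreconnected P) (hU : IsOpen U) (hV : IsOpen V)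
    (hUV : Disjoint (closure U) (closure V))
    (hPU : (P ∩ frontier U).Nonempty) (hPV : (P ∩ frontier V).Nonempty) :
    ∃ z ∈ P \ (U ∪ V), (connectedComponentIn (P \ (U ∪ V)) z ∩ frontier U).Nonempty ∧
      (connectedComponentIn (P \ (U ∪ V)) z ∩ frontier V).Nonempty := by
  by_contra! hK
  have hUK : P ∩ frontier U ⊆ P \ (U ∪ V) := fun x ⟨hxP, hxU⟩ =>
    have hxU : x ∈ closure U \ U := hU.frontier_eq ▸ hxU
    ⟨hxP, fun h => h.elim hxU.2 fun hxV => hUV.notMem_of_mem_left hxU.1 (subset_closure hxV)⟩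
  obtain ⟨C, hCK, hC, hKC, hUC, hCV⟩ :=
    (hP.diff (hU.union hV)).exists_isClosed_superset_disjoint_of_connectedComponentIn
      (hP.isClosed.inter isClosed_frontier) (hP.isClosed.inter isClosed_frontier) hUK
      fun x hx => disjoint_left.mpr fun y hyx hyV =>
        (hK x (hUK hx) ⟨x, mem_connectedComponentIn (hUK hx), hx.2⟩).subset ⟨hyx, hyV.2⟩
  exact hPc.not_inter_frontiers_nonempty_of_cut hP.isClosed hU hV hUV hCK hC hKC hUC hCV
    ⟨hPU, hPV⟩

end CutWire

/-- cut-wire consequence for a continuum meeting two disjoint circles. -/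
theorem cut_wire_component (P : Set ℂ) (hP : IsCompact P) (hPc : IsConnected P)
    (a b : ℂ) (δ : ℝ) (hδ : 0 < δ)
    (hdisj : closure (Metric.ball a δ) ∩ closure (Metric.ball b δ) = ∅)
    (ha : (P ∩ Metric.sphere a δ).Nonempty) (hb : (P ∩ Metric.sphere b δ).Nonempty) :
    ∃ Q : Set ℂ, IsComponentOf Q (P \ (Metric.ball a δ ∪ Metric.ball b δ)) ∧
      (Q ∩ Metric.sphere a δ).Nonempty ∧ (Q ∩ Metric.sphere b δ).Nonempty := by
  simp only [← frontier_ball _ hδ.ne'] at ha hb ⊢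
  obtain ⟨z, hz, hza, hzb⟩ := hP.exists_connectedComponentIn_sdiff_inter_frontiers_nonempty
    hPc.isPreconnected isOpen_ball isOpen_ball (disjoint_iff_inter_eq_empty.mpr hdisj) ha hb
  exact ⟨_, ⟨z, hz, rfl⟩, hza, hzb⟩
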